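/- For every real number t with 0 < t ≤ 1/2, the perturbed system x₁² − x₂² − 1 = 0, x₁⁴ + x₂² + t·(x₁ − 2) − 1 = 0 has exactly four real solutions, and each of them is a simple root of the system. -/
import Mathlib


/-- A point `x ∈ ℝⁿ` is a *simple root* of the system `f₁ = ⋯ = fₙ = 0` if all the
polynomials vanish at `x` and the Jacobian determinant is nonzero. -/
def IsSimpleRoot {n : ℕ} (f : Fin n → MvPolynomial (Fin n) ℝ) (x : Fin n → ℝ) : Prop :=
  (∀ i, MvPolynomial.eval x (f i) = 0) ∧
  (Matrix.of fun i j : Fin n => MvPolynomial.eval x (MvPolynomial.pderiv j (f i))).det ≠ 0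

/-- The perturbed system (20) of the paper:
`x₁² − x₂² − 1 = 0`, `x₁⁴ + x₂² + t·(x₁ − 2) − 1 = 0`. -/
noncomputable def sys11 (t : ℝ) : Fin 2 → MvPolynomial (Fin 2) ℝ :=
  ![MvPolynomial.X 0 ^ 2 - MvPolynomial.X 1 ^ 2 - 1,
    MvPolynomial.X 0 ^ 4 + MvPolynomial.X 1 ^ 2 +
      MvPolynomial.C t * (MvPolynomial.X 0 - 2) - 1]

private def gg (t x : ℝ) : ℝ := x^4 + x^2 + t*(x-2) - 2

private lemma uniq_pos {t x y : ℝ} (ht0 : 0 < t) (hx : 1 < x) (hy : 1 < y)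
    (hgx : gg t x = 0) (hgy : gg t y = 0) : x = y := by
  have key : ∀ u v : ℝ, 1 < u → u < v → gg t u < gg t v := by
    intro u v hu huv
    have hv : 1 < v := lt_trans hu huv
    have hb : 0 < u^3 + u^2*v + u*v^2 + v^3 + u + v + t := by nlinarith
    have hm := mul_pos (sub_pos.2 huv) hb
    unfold gg
    nlinarith [hm]
  rcases lt_trichotomy x y with h | h | h
  · exact absurd (hgx.trans hgy.symm) (ne_of_lt (key x y hx h))
  · exact h
  · exact absurd (hgy.trans hgx.symm) (ne_of_lt (key y x hy h))

private lemma uniq_neg {t x y : ℝ} (ht0 : 0 < t) (ht : t ≤ 1/2) (hx : x < -1) (hy : y < -1)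
    (hgx : gg t x = 0) (hgy : gg t y = 0) : x = y := by
  have key : ∀ u v : ℝ, u < -1 → v < -1 → u < v → gg t v < gg t u := by
    intro u v hu hv huv
    have huv1 : 1 < u * v := by nlinarith
    have hu3 : u^3 < -1 := by nlinarith [sq_nonneg (u+1), sq_nonneg u]
    have hv3 : v^3 < -1 := by nlinarith [sq_nonneg (v+1), sq_nonneg v]
    have hmix : u^2*v + u*v^2 ≤ u + v := by nlinarith
    have hb : u^3 + u^2*v + u*v^2 + v^3 + u + v + t < 0 := by nlinarith
    have hm := mul_pos (sub_pos.2 huv) (neg_pos.2 hb)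
    unfold gg
    nlinarith [hm]
  rcases lt_trichotomy x y with h | h | h
  · exact absurd (hgy.trans hgx.symm) (ne_of_lt (key x y hx hy h))
  · exact h
  · exact absurd (hgx.trans hgy.symm) (ne_of_lt (key y x hy hx h))

private lemma range_lemma {t x : ℝ} (ht0 : 0 < t) (hgx : gg t x = 0) : 1 < x ∨ x < -1 := by
  by_contra h
  push_neg at h
  obtain ⟨h1, h2⟩ := h
  have hx2 : x^2 ≤ 1 := by nlinarith
  unfold gg at hgx
  nlinarith [sq_nonneg x]

private lemma exists_pos {t : ℝ} (ht0 : 0 < t) (ht : t ≤ 1/2) :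
    ∃ a, 1 < a ∧ a < 2 ∧ gg t a = 0 := by
  have hc : ContinuousOn (gg t) (Set.Icc 1 2) := by
    apply Continuous.continuousOn; unfold gg; continuity
  have h0 : (0:ℝ) ∈ Set.Ioo (gg t 1) (gg t 2) := by
    constructor <;> (unfold gg; norm_num) <;> linarith
  have := intermediate_value_Ioo (by norm_num : (1:ℝ) ≤ 2) hc h0
  obtain ⟨a, ha, hga⟩ := this
  exact ⟨a, ha.1, ha.2, hga⟩

private lemma exists_neg {t : ℝ} (ht0 : 0 < t) (ht : t ≤ 1/2) :
    ∃ b, -2 < b ∧ b < -1 ∧ gg t b = 0 := by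
  have hc : ContinuousOn (gg t) (Set.Icc (-2) (-1)) := by
    apply Continuous.continuousOn; unfold gg; continuity
  have h0 : (0:ℝ) ∈ Set.Ioo (gg t (-1)) (gg t (-2)) := by
    constructor <;> (unfold gg; norm_num) <;> linarith
  have := intermediate_value_Ioo' (by norm_num : (-2:ℝ) ≤ -1) hc h0
  obtain ⟨b, hb, hgb⟩ := this
  exact ⟨b, hb.1, hb.2, hgb⟩

open MvPolynomial in
private lemma det_sys (t : ℝ) (v : Fin 2 → ℝ) :
    (Matrix.of fun i j : Fin 2 => MvPolynomial.eval v (MvPolynomial.pderiv j (sys11 t i))).det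
      = 2 * (v 1) * (4 * (v 0)^3 + 2 * (v 0) + t) := by
  rw [Matrix.det_fin_two]
  simp [sys11, (map_ofNat (MvPolynomial.C (σ := Fin 2) (R := ℝ)) 2).symm]
  ring

private lemma hchar (t : ℝ) (v : Fin 2 → ℝ) :
    (∀ i, MvPolynomial.eval v (sys11 t i) = 0) ↔
      (gg t (v 0) = 0 ∧ (v 1)^2 = (v 0)^2 - 1) := by
  constructor
  · intro h
    have h0 := h 0
    have h1 := h 1
    simp [sys11] at h0 h1
    unfold gg
    constructor
    · linear_combination h0 + h1
    · linear_combination -h0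
  · rintro ⟨h1, h2⟩
    unfold gg at h1
    intro i
    fin_cases i
    · simp [sys11]; linear_combination -h2
    · simp [sys11]; linear_combination h1 + h2

private lemma cube_pos {x : ℝ} (h : 1 < x) : 1 < x ^ 3 := by
  nlinarith [sq_nonneg (x - 1), sq_nonneg x]

private lemma cube_neg {x : ℝ} (h : x < -1) : x ^ 3 < -1 := by
  nlinarith [sq_nonneg (x + 1), sq_nonneg x]

private lemma vec_ne {p q r s : ℝ} (h : p ≠ r ∨ q ≠ s) :
    (![p, q] : Fin 2 → ℝ) ≠ ![r, s] := by
  intro hpq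
  rcases h with h | h
  · exact h (by simpa using congrFun hpq 0)
  · exact h (by simpa using congrFun hpq 1)

theorem stmt_11' (t : ℝ) (ht0 : 0 < t) (ht : t ≤ 1 / 2) :
    {x : Fin 2 → ℝ | ∀ i, MvPolynomial.eval x (sys11 t i) = 0}.ncard = 4 ∧
    (∀ x : Fin 2 → ℝ, (∀ i, MvPolynomial.eval x (sys11 t i) = 0) →
      IsSimpleRoot (sys11 t) x) := by
  obtain ⟨a, ha1, ha2, hga⟩ := exists_pos ht0 ht
  obtain ⟨b, hb2, hb1, hgb⟩ := exists_neg ht0 ht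
  have ha21 : 1 < a ^ 2 := by nlinarith
  have hb21 : 1 < b ^ 2 := by nlinarith
  set c := Real.sqrt (a ^ 2 - 1) with hc_def
  set d := Real.sqrt (b ^ 2 - 1) with hd_def
  have hc2 : c ^ 2 = a ^ 2 - 1 := Real.sq_sqrt (by linarith)
  have hd2 : d ^ 2 = b ^ 2 - 1 := Real.sq_sqrt (by linarith)
  have hc0 : 0 < c := Real.sqrt_pos.2 (by linarith)
  have hd0 : 0 < d := Real.sqrt_pos.2 (by linarith)
  have hab : a ≠ b := by intro h; linarith
  have hset : {x : Fin 2 → ℝ | ∀ i, MvPolynomial.eval x (sys11 t i) = 0}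
      = {![a, c], ![a, -c], ![b, d], ![b, -d]} := by
    ext v
    simp only [Set.mem_setOf_eq, hchar, Set.mem_insert_iff, Set.mem_singleton_iff]
    constructor
    · rintro ⟨hg, hy⟩
      rcases range_lemma ht0 hg with hv | hv
      · have hva : v 0 = a := uniq_pos ht0 hv ha1 hg hga
        have hvc : (v 1 - c) * (v 1 + c) = 0 := by
          rw [hva] at hy; nlinarith [hy, hc2]
        rcases mul_eq_zero.1 hvc with h | h
        · left
          funext i; fin_cases i
          · simpa using hva
          · simpa using (by linarith : v 1 = c)
        · right; left
          funext i; fin_cases i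
          · simpa using hva
          · simpa using (by linarith : v 1 = -c)
      · have hvb : v 0 = b := uniq_neg ht0 ht hv hb1 hg hgb
        have hvd : (v 1 - d) * (v 1 + d) = 0 := by
          rw [hvb] at hy; nlinarith [hy, hd2]
        rcases mul_eq_zero.1 hvd with h | h
        · right; right; left
          funext i; fin_cases i
          · simpa using hvb
          · simpa using (by linarith : v 1 = d)
        · right; right; right
          funext i; fin_cases i
          · simpa using hvb
          · simpa using (by linarith : v 1 = -d)
    · rintro (rfl | rfl | rfl | rfl)
      · exact ⟨by simpa using hga, by simp [hc2]⟩
      · exact ⟨by simpa using hga, by simp [neg_sq, hc2]⟩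
      · exact ⟨by simpa using hgb, by simp [hd2]⟩
      · exact ⟨by simpa using hgb, by simp [neg_sq, hd2]⟩
  constructor
  · rw [hset]
    have h1 : (![a, c] : Fin 2 → ℝ) ∉ ({![a, -c], ![b, d], ![b, -d]} : Set (Fin 2 → ℝ)) := by
      simp only [Set.mem_insert_iff, Set.mem_singleton_iff]
      push_neg
      exact ⟨vec_ne (Or.inr (by linarith)), vec_ne (Or.inl hab), vec_ne (Or.inl hab)⟩
    have h2 : (![a, -c] : Fin 2 → ℝ) ∉ ({![b, d], ![b, -d]} : Set (Fin 2 → ℝ)) := by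
      simp only [Set.mem_insert_iff, Set.mem_singleton_iff]
      push_neg
      exact ⟨vec_ne (Or.inl hab), vec_ne (Or.inl hab)⟩
    have h3 : (![b, d] : Fin 2 → ℝ) ∉ ({![b, -d]} : Set (Fin 2 → ℝ)) := by
      simp only [Set.mem_singleton_iff]
      exact vec_ne (Or.inr (by linarith))
    rw [Set.ncard_insert_of_notMem h1, Set.ncard_insert_of_notMem h2,
      Set.ncard_insert_of_notMem h3, Set.ncard_singleton]
  · intro v hv
    refine ⟨hv, ?_⟩
    rw [det_sys]
    obtain ⟨hg, hy⟩ := (hchar t v).1 hv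
    rcases range_lemma ht0 hg with hv0 | hv0
    · have h1 : v 1 ≠ 0 := by intro h; rw [h] at hy; nlinarith
      exact mul_ne_zero (mul_ne_zero two_ne_zero h1)
        (ne_of_gt (by linarith [cube_pos hv0]))
    · have h1 : v 1 ≠ 0 := by intro h; rw [h] at hy; nlinarith
      exact mul_ne_zero (mul_ne_zero two_ne_zero h1)
        (ne_of_lt (by linarith [cube_neg hv0]))

/-- For every `t` with `0 < t ≤ 1/2`, the perturbed system
`x₁² − x₂² − 1 = 0`, `x₁⁴ + x₂² + t(x₁ − 2) − 1 = 0` has exactly four real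
solutions, each of which is a simple root. -/
theorem stmt_11 (t : ℝ) (ht0 : 0 < t) (ht : t ≤ 1 / 2) :
    {x : Fin 2 → ℝ | ∀ i, MvPolynomial.eval x (sys11 t i) = 0}.ncard = 4 ∧
    (∀ x : Fin 2 → ℝ, (∀ i, MvPolynomial.eval x (sys11 t i) = 0) →
      IsSimpleRoot (sys11 t) x) := by
  exact stmt_11' t ht0 ht
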